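/- If (y₁, p₁, r₁) is a solution of R = R_W(y,p,r) with cos(y₁) ≠ 0, then (y₂, p₂, r₂) with y₂ = π − y₁ (or −π − y₁ if y₁ < 0), p₂ = p₁ − π (or p₁ + π if p₁ < 0), and r₂ = r₁ − π (or r₁ + π if r₁ < 0), is also a solution: R_W(y₂, p₂, r₂) = R_W(y₁, p₁, r₁). -/

import Mathlib

open Real Matrix

noncomputable def RXl (p : ℝ) : Matrix (Fin 3) (Fin 3) ℝ :=
  !![1, 0, 0; 0, Real.cos p, Real.sin p; 0, -Real.sin p, Real.cos p]

noncomputable def RYl (y : ℝ) : Matrix (Fin 3) (Fin 3) ℝ :=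
  !![Real.cos y, 0, -Real.sin y; 0, 1, 0; Real.sin y, 0, Real.cos y]

noncomputable def RZl (r : ℝ) : Matrix (Fin 3) (Fin 3) ℝ :=
  !![Real.cos r, Real.sin r, 0; -Real.sin r, Real.cos r, 0; 0, 0, 1]

/-- The 300W-LP rotation matrix. -/
noncomputable def RW (y p r : ℝ) : Matrix (Fin 3) (Fin 3) ℝ := RXl p * RYl y * RZl r

/-! Shifting `p` or `r` by `±π` negates its cosine and sine, which multiplies `RXl p` on the right
and `RZl r` on the left by a diagonal sign matrix. These sign matrices meet around the middle factor,
and conjugating `RYl (±π - y)` by them gives back `RYl y`. -/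

lemma RXl_eq_mul_diagonal {p p' : ℝ} (hc : cos p' = -cos p) (hs : sin p' = -sin p) :
    RXl p' = RXl p * diagonal ![1, -1, -1] := by
  ext i j
  fin_cases i <;> fin_cases j <;> simp [RXl, mul_diagonal, hc, hs]

lemma RZl_eq_diagonal_mul {r r' : ℝ} (hc : cos r' = -cos r) (hs : sin r' = -sin r) :
    RZl r' = diagonal ![-1, -1, 1] * RZl r := by
  ext i j
  fin_cases i <;> fin_cases j <;> simp [RZl, diagonal_mul, hc, hs]

lemma diagonal_mul_RYl_mul_diagonal {y y' : ℝ} (hc : cos y' = -cos y) (hs : sin y' = sin y) :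
    diagonal ![1, -1, -1] * RYl y' * diagonal ![-1, -1, 1] = RYl y := by
  ext i j
  fin_cases i <;> fin_cases j <;> simp [RYl, diagonal_mul, mul_diagonal, hc, hs]

lemma RW_eq_of_cos_sin {y p r y' p' r' : ℝ}
    (hcy : cos y' = -cos y) (hsy : sin y' = sin y)
    (hcp : cos p' = -cos p) (hsp : sin p' = -sin p)
    (hcr : cos r' = -cos r) (hsr : sin r' = -sin r) :
    RW y' p' r' = RW y p r := by
  rw [RW, RXl_eq_mul_diagonal hcp hsp, RZl_eq_diagonal_mul hcr hsr, RW,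
    ← diagonal_mul_RYl_mul_diagonal hcy hsy]
  simp only [Matrix.mul_assoc]

theorem stmt_6_general (y₁ p₁ r₁ : ℝ) :
    RW (if y₁ < 0 then -Real.pi - y₁ else Real.pi - y₁)
       (if p₁ < 0 then p₁ + Real.pi else p₁ - Real.pi)
       (if r₁ < 0 then r₁ + Real.pi else r₁ - Real.pi) = RW y₁ p₁ r₁ := by
  apply RW_eq_of_cos_sin <;> split_ifs <;>
    simp only [cos_add_pi, sin_add_pi, cos_sub_pi, sin_sub_pi, cos_pi_sub, sin_pi_sub,
      neg_sub_left, cos_neg, sin_neg, neg_neg]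

theorem stmt_6 (y₁ p₁ r₁ : ℝ) (hy : Real.cos y₁ ≠ 0) :
    RW (if y₁ < 0 then -Real.pi - y₁ else Real.pi - y₁)
       (if p₁ < 0 then p₁ + Real.pi else p₁ - Real.pi)
       (if r₁ < 0 then r₁ + Real.pi else r₁ - Real.pi) = RW y₁ p₁ r₁ :=
  stmt_6_general y₁ p₁ r₁
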